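/- Let 1 < m ≤ √(2 + √3). Then with U₈(φ; m) = m⁴ − 2m²(φ² + 2) + 6φ⁴ − 2φ² + 1, one has U₈(φ; m) ≤ 0 for all φ ∈ [−1, 1]. Consequently, for the generalized φ⁸ potential W₈(φ;m) = (φ²−1)²(φ²−m²)², the transformed potential V satisfies φ·V'(φ) ≤ 0 for all φ ∈ (−1, 1). -/

import Mathlib

open Real Set

/-! Writing `W₈ = g²` with `g(φ) = (φ² - 1)(φ² - m²)`, the transformed potential
`W'²/W - W''` equals `2(g'² - g g'')` wherever `g ≠ 0`, so its derivative is
`2(g' g'' - g g''') = 8φ U₈(φ)`. As a function of `t = φ² ∈ [0, 1]`, `U₈` is a convex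
quadratic, hence bounded by its values `m⁴ - 4m² + 1` at `t = 0` and `(m² - 1)(m² - 5)`
at `t = 1`; both are `≤ 0` for `1 < m² ≤ 2 + √3`. -/

noncomputable def transformedPotential (W : ℝ → ℝ) (x : ℝ) : ℝ :=
  deriv W x ^ 2 / W x - iteratedDeriv 2 W x

section SquarePotential

variable {g g' g'' : ℝ → ℝ}

theorem transformedPotential_sq_eqOn (hg : ∀ x, HasDerivAt g (g' x) x)
    (hg' : ∀ x, HasDerivAt g' (g'' x) x) :
    EqOn (transformedPotential fun x => g x ^ 2) (fun x => 2 * (g' x ^ 2 - g x * g'' x))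
      {x | g x ≠ 0} := by
  have hW : ∀ x, HasDerivAt (fun x => g x ^ 2) (2 * g x * g' x) x := fun x => by
    simpa using (hg x).fun_pow 2
  have hW' : ∀ x, HasDerivAt (fun x => 2 * g x * g' x) (2 * (g' x ^ 2 + g x * g'' x)) x :=
    fun x => (((hg x).const_mul 2).mul (hg' x)).congr_deriv (by ring)
  have hdW : deriv (fun x => g x ^ 2) = fun x => 2 * g x * g' x := funext fun x => (hW x).deriv
  intro x (hx : g x ≠ 0)
  rw [transformedPotential, iteratedDeriv_succ, iteratedDeriv_one, hdW, (hW' x).deriv]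
  field_simp
  ring

theorem deriv_transformedPotential_sq (hg : ∀ x, HasDerivAt g (g' x) x)
    (hg' : ∀ x, HasDerivAt g' (g'' x) x) {x c : ℝ} (hg'' : HasDerivAt g'' c x) (hx : g x ≠ 0) :
    deriv (transformedPotential fun x => g x ^ 2) x = 2 * (g' x * g'' x - g x * c) := by
  have hopen : IsOpen {x | g x ≠ 0} :=
    isOpen_ne.preimage (continuous_iff_continuousAt.2 fun x => (hg x).continuousAt)
  have hV : HasDerivAt (fun x => 2 * (g' x ^ 2 - g x * g'' x))
      (2 * (g' x * g'' x - g x * c)) x :=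
    ((((hg' x).fun_pow 2).sub ((hg x).mul hg'')).const_mul 2).congr_deriv (by push_cast; ring)
  exact (hV.congr_of_eventuallyEq
    ((transformedPotential_sq_eqOn hg hg').eventuallyEq_of_mem (hopen.mem_nhds hx))).deriv

end SquarePotential

theorem deriv_transformedPotential_phi8 (m : ℝ) {x : ℝ} (hx : (x ^ 2 - 1) * (x ^ 2 - m ^ 2) ≠ 0) :
    deriv (transformedPotential fun x => (x ^ 2 - 1) ^ 2 * (x ^ 2 - m ^ 2) ^ 2) x =
      8 * x * (m ^ 4 - 2 * m ^ 2 * (x ^ 2 + 2) + 6 * x ^ 4 - 2 * x ^ 2 + 1) := by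
  have hg : ∀ x : ℝ, HasDerivAt (fun x => (x ^ 2 - 1) * (x ^ 2 - m ^ 2))
      (4 * x ^ 3 - 2 * (1 + m ^ 2) * x) x := fun x =>
    (((hasDerivAt_pow 2 x).sub_const 1).mul ((hasDerivAt_pow 2 x).sub_const (m ^ 2))).congr_deriv
      (by push_cast; ring)
  have hg' : ∀ x : ℝ, HasDerivAt (fun x => 4 * x ^ 3 - 2 * (1 + m ^ 2) * x)
      (12 * x ^ 2 - 2 * (1 + m ^ 2)) x := fun x =>
    (((hasDerivAt_pow 3 x).const_mul 4).sub
      ((hasDerivAt_id x).const_mul (2 * (1 + m ^ 2)))).congr_deriv (by push_cast; ring)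
  have hg'' : HasDerivAt (fun x => 12 * x ^ 2 - 2 * (1 + m ^ 2)) (24 * x) x :=
    (((hasDerivAt_pow 2 x).const_mul 12).sub_const (2 * (1 + m ^ 2))).congr_deriv
      (by push_cast; ring)
  have hW : (fun x : ℝ => (x ^ 2 - 1) ^ 2 * (x ^ 2 - m ^ 2) ^ 2) =
      fun x => ((x ^ 2 - 1) * (x ^ 2 - m ^ 2)) ^ 2 := funext fun x => by ring
  rw [hW, deriv_transformedPotential_sq hg hg' hg'' hx]
  ring

theorem sq_sub_four_mul_add_one_nonpos {a : ℝ} (h₁ : 2 - √3 ≤ a) (h₂ : a ≤ 2 + √3) :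
    a ^ 2 - 4 * a + 1 ≤ 0 := by
  have hfactor : a ^ 2 - 4 * a + 1 = (a - (2 - √3)) * (a - (2 + √3)) := by
    linear_combination sq_sqrt (zero_le_three : (0 : ℝ) ≤ 3)
  rw [hfactor]
  exact mul_nonpos_of_nonneg_of_nonpos (sub_nonneg.2 h₁) (sub_nonpos.2 h₂)

theorem phi8_U_nonpos {m φ : ℝ} (hm1 : 1 < m) (hm2 : m ≤ √(2 + √3)) (hφ : φ ∈ Icc (-1 : ℝ) 1) :
    m ^ 4 - 2 * m ^ 2 * (φ ^ 2 + 2) + 6 * φ ^ 4 - 2 * φ ^ 2 + 1 ≤ 0 := by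
  have hm_sq : m ^ 2 ≤ 2 + √3 := (le_sqrt' (by linarith)).1 hm2
  have hm_sq_gt : 1 < m ^ 2 := by nlinarith
  have hsqrt3 : 1 ≤ √3 ∧ √3 < 2 :=
    ⟨(le_sqrt' one_pos).2 (by norm_num), (sqrt_lt' two_pos).2 (by norm_num)⟩
  have hU₀ : (m ^ 2) ^ 2 - 4 * m ^ 2 + 1 ≤ 0 :=
    sq_sub_four_mul_add_one_nonpos (by linarith [hsqrt3.1]) hm_sq
  have hU₁ : (m ^ 2 - 1) * (m ^ 2 - 5) ≤ 0 :=
    mul_nonpos_of_nonneg_of_nonpos (by linarith) (by linarith [hsqrt3.2])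
  obtain ⟨ht₀, ht₁⟩ : 0 ≤ φ ^ 2 ∧ φ ^ 2 ≤ 1 :=
    ⟨sq_nonneg φ, sq_le_one_iff_abs_le_one φ |>.2 (abs_le.2 hφ)⟩
  -- convexity in `t = φ²`: the chord through `t = 0` and `t = 1` lies above by `6 t (1 - t)`
  nlinarith [mul_nonneg ht₀ (sub_nonneg.2 ht₁), mul_nonneg (sub_nonneg.2 ht₁) (neg_nonneg.2 hU₀),
    mul_nonneg ht₀ (neg_nonneg.2 hU₁)]

theorem phi8_odd_kink_repulsivity (m : ℝ) (hm1 : 1 < m)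
    (hm2 : m ≤ Real.sqrt (2 + Real.sqrt 3)) :
    let U : ℝ → ℝ := fun φ => m ^ 4 - 2 * m ^ 2 * (φ ^ 2 + 2)
        + 6 * φ ^ 4 - 2 * φ ^ 2 + 1
    let W : ℝ → ℝ := fun φ => (φ ^ 2 - 1) ^ 2 * (φ ^ 2 - m ^ 2) ^ 2
    let V : ℝ → ℝ := fun φ => (deriv W φ) ^ 2 / W φ - iteratedDeriv 2 W φ
    (∀ φ ∈ Icc (-1 : ℝ) 1, U φ ≤ 0) ∧
    (∀ φ ∈ Ioo (-1 : ℝ) 1, φ * deriv V φ ≤ 0) := by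
  intro U W V
  refine ⟨fun φ hφ => phi8_U_nonpos hm1 hm2 hφ, fun φ hφ => ?_⟩
  have hφ_sq : φ ^ 2 < 1 := sq_lt_one_iff_abs_lt_one φ |>.2 (abs_lt.2 hφ)
  have hg : (φ ^ 2 - 1) * (φ ^ 2 - m ^ 2) ≠ 0 :=
    mul_ne_zero (by linarith) (by nlinarith)
  have hdV : φ * deriv V φ = 8 * φ ^ 2 * U φ := by
    rw [show deriv V φ = 8 * φ * U φ from deriv_transformedPotential_phi8 m hg]
    ring
  rw [hdV]
  exact mul_nonpos_of_nonneg_of_nonpos (by positivity)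
    (phi8_U_nonpos hm1 hm2 (Ioo_subset_Icc_self hφ))
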